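/- arXiv:1202.2441 — 2 statements merged into one kernel-verified Lean document; each statement's English description precedes it below -/
import Mathlib

section
/- Let (C, Δ, ε, θ, 1) be a Frobenius R-coring. Define m : C ⊗_R C → C by m(c ⊗ d) = c₍₁₎θ(c₍₂₎ ⊗ d). Then m(c ⊗ d) also equals θ(c ⊗ d₍₁₎)d₍₂₎, and (C, m, 1) is an associative unital R-ring (with the coring element 1 as multiplicative unit and the R-bimodule structure of C compatible with multiplication). -/
/-!
STATEMENT 3. A Frobenius `R`-coring `(C, Δ, ε, θ, 1)` yields an associative
unital `R`-ring via `m(c ⊗ d) = c₍₁₎θ(c₍₂₎ ⊗ d) = θ(c ⊗ d₍₁₎)d₍₂₎`.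
(`R` commutative acting centrally.)
-/

open TensorProduct

section CoringDefs

variable {R : Type*} [CommRing R] {C : Type*} [AddCommGroup C] [Module R C]

/-- `x ⊗ y ↦ ε(x) • y`. -/
noncomputable def ctrL (ε : C →ₗ[R] R) : C ⊗[R] C →ₗ[R] C :=
  (TensorProduct.lid R C).toLinearMap ∘ₗ LinearMap.rTensor C ε

/-- `x ⊗ y ↦ ε(y) • x`. -/
noncomputable def ctrR (ε : C →ₗ[R] R) : C ⊗[R] C →ₗ[R] C :=
  (TensorProduct.rid R C).toLinearMap ∘ₗ LinearMap.lTensor C ε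

/-- `x ⊗ y ↦ θ(y ⊗ d) • x`; composing with `Δ` gives `c ↦ c₍₁₎θ(c₍₂₎ ⊗ d)`. -/
noncomputable def corL (θ : C ⊗[R] C →ₗ[R] R) (d : C) : C ⊗[R] C →ₗ[R] C :=
  (TensorProduct.rid R C).toLinearMap ∘ₗ
    LinearMap.lTensor C (θ ∘ₗ (TensorProduct.mk R C C).flip d)

/-- `x ⊗ y ↦ θ(c ⊗ x) • y`; composing with `Δ` gives `d ↦ θ(c ⊗ d₍₁₎)d₍₂₎`. -/
noncomputable def corR (θ : C ⊗[R] C →ₗ[R] R) (c : C) : C ⊗[R] C →ₗ[R] C :=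
  (TensorProduct.lid R C).toLinearMap ∘ₗ
    LinearMap.rTensor C (θ ∘ₗ TensorProduct.mk R C C c)

/-- `(C, Δ, ε, θ, one)` is a Frobenius `R`-coring: `Δ` is a coassociative
comultiplication with counit `ε` (both `R`-bimodule maps), and the Frobenius
system `(θ, one)` satisfies `c₍₁₎θ(c₍₂₎ ⊗ d) = θ(c ⊗ d₍₁₎)d₍₂₎` and
`θ(c ⊗ 1) = θ(1 ⊗ c) = ε(c)`. -/
noncomputable def IsFrobeniusCoring (Δ : C →ₗ[R] C ⊗[R] C) (ε : C →ₗ[R] R)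
    (θ : C ⊗[R] C →ₗ[R] R) (one : C) : Prop :=
  (∀ c : C, TensorProduct.assoc R C C C (LinearMap.rTensor C Δ (Δ c))
      = LinearMap.lTensor C Δ (Δ c)) ∧
  (∀ c : C, ctrL ε (Δ c) = c ∧ ctrR ε (Δ c) = c) ∧
  (∀ c d : C, corL θ d (Δ c) = corR θ c (Δ d)) ∧
  (∀ c : C, θ (c ⊗ₜ[R] one) = ε c ∧ θ (one ⊗ₜ[R] c) = ε c)

end CoringDefs

section AuxLemmas

variable {R : Type*} [CommRing R] {C : Type*} [AddCommGroup C] [Module R C]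

@[simp] lemma ctrL_tmul (ε : C →ₗ[R] R) (x y : C) :
    ctrL ε (x ⊗ₜ[R] y) = ε x • y := by
  simp [ctrL]

@[simp] lemma ctrR_tmul (ε : C →ₗ[R] R) (x y : C) :
    ctrR ε (x ⊗ₜ[R] y) = ε y • x := by
  simp [ctrR]

@[simp] lemma corL_tmul (θ : C ⊗[R] C →ₗ[R] R) (d x y : C) :
    corL θ d (x ⊗ₜ[R] y) = θ (y ⊗ₜ[R] d) • x := by
  simp [corL]

@[simp] lemma corR_tmul (θ : C ⊗[R] C →ₗ[R] R) (c x y : C) :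
    corR θ c (x ⊗ₜ[R] y) = θ (c ⊗ₜ[R] x) • y := by
  simp [corR]

end AuxLemmas

/-- Let `(C, Δ, ε, θ, 1)` be a Frobenius `R`-coring and define
`m(c ⊗ d) = c₍₁₎θ(c₍₂₎ ⊗ d)`.  Then `m(c ⊗ d) = θ(c ⊗ d₍₁₎)d₍₂₎` as well, and
`(C, m, 1)` is an associative unital `R`-ring (`m` being `R`-bilinear, so that
the `R`-bimodule structure of `C` is compatible with the multiplication). -/
theorem ring_of_frobenius_coring
    {R : Type*} [CommRing R] {C : Type*} [AddCommGroup C] [Module R C]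
    (Δ : C →ₗ[R] C ⊗[R] C) (ε : C →ₗ[R] R) (θ : C ⊗[R] C →ₗ[R] R) (one : C)
    (h : IsFrobeniusCoring Δ ε θ one)
    (m : C → C → C) (hm : ∀ c d : C, m c d = corL θ d (Δ c)) :
    -- the other formula for `m`
    (∀ c d : C, m c d = corR θ c (Δ d)) ∧
    -- associativity
    (∀ a b c : C, m (m a b) c = m a (m b c)) ∧
    -- `1` is a two-sided unit
    (∀ c : C, m one c = c ∧ m c one = c) ∧
    -- `m` is `R`-bilinear (compatibility with the `R`-bimodule structure)
    (∀ a a' b : C, m (a + a') b = m a b + m a' b) ∧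
    (∀ a b b' : C, m a (b + b') = m a b + m a b') ∧
    (∀ (r : R) (a b : C), m (r • a) b = r • m a b ∧ m a (r • b) = r • m a b) := by
  obtain ⟨hco, hctr, hfr, hθ1⟩ := h
  have hm' : ∀ c d : C, m c d = corR θ c (Δ d) := fun c d => (hm c d).trans (hfr c d)
  refine ⟨hm', ?_, ?_, ?_, ?_, ?_⟩
  · -- associativity
    intro a b c
    -- U : C ⊗ (C ⊗ C) → C, x ⊗ s ↦ θ(a ⊗ x) • corL θ c s
    set U : C ⊗[R] (C ⊗[R] C) →ₗ[R] C :=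
      TensorProduct.lift
        (((LinearMap.lsmul R (C ⊗[R] C →ₗ[R] C)).flip (corL θ c)) ∘ₗ
          (θ ∘ₗ TensorProduct.mk R C C a)) with hUdef
    -- V : (C ⊗ C) ⊗ C → C, s ⊗ z ↦ θ(z ⊗ c) • corR θ a s
    set V : (C ⊗[R] C) ⊗[R] C →ₗ[R] C :=
      TensorProduct.lift
        ((((LinearMap.lsmul R (C ⊗[R] C →ₗ[R] C)).flip (corR θ a)) ∘ₗ
          (θ ∘ₗ (TensorProduct.mk R C C).flip c)).flip) with hVdef
    have hU : ∀ (x : C) (s : C ⊗[R] C),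
        U (x ⊗ₜ[R] s) = θ (a ⊗ₜ[R] x) • corL θ c s := by
      intro x s; simp [hUdef]
    have hV : ∀ (s : C ⊗[R] C) (z : C),
        V (s ⊗ₜ[R] z) = θ (z ⊗ₜ[R] c) • corR θ a s := by
      intro s z; simp [hVdef]
    have stepA : ∀ t : C ⊗[R] C,
        corL θ c (Δ (corR θ a t)) = U (LinearMap.lTensor C Δ t) := by
      intro t
      induction t using TensorProduct.induction_on with
      | zero => simp
      | tmul x y => simp [hU]
      | add s t hs ht => simp [map_add, hs, ht]
    have stepB : ∀ t : C ⊗[R] C,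
        corR θ a (Δ (corL θ c t)) = V (LinearMap.rTensor C Δ t) := by
      intro t
      induction t using TensorProduct.induction_on with
      | zero => simp
      | tmul x y => simp [hV]
      | add s t hs ht => simp [map_add, hs, ht]
    have stepC : ∀ w : (C ⊗[R] C) ⊗[R] C,
        U (TensorProduct.assoc R C C C w) = V w := by
      intro w
      induction w using TensorProduct.induction_on with
      | zero => simp
      | tmul s z =>
          induction s using TensorProduct.induction_on with
          | zero => simp
          | tmul x y =>
              simp only [TensorProduct.assoc_tmul, hU, hV, corL_tmul, corR_tmul,
                smul_smul]
              rw [mul_comm]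
          | add s t hs ht =>
              simp only [TensorProduct.add_tmul, map_add, hs, ht]
      | add s t hs ht => simp [map_add, hs, ht]
    calc m (m a b) c = corL θ c (Δ (corR θ a (Δ b))) := by rw [hm' a b, hm]
      _ = U (LinearMap.lTensor C Δ (Δ b)) := stepA _
      _ = U (TensorProduct.assoc R C C C (LinearMap.rTensor C Δ (Δ b))) := by
            rw [hco b]
      _ = V (LinearMap.rTensor C Δ (Δ b)) := stepC _
      _ = corR θ a (Δ (corL θ c (Δ b))) := (stepB _).symm
      _ = m a (m b c) := by rw [hm b c, hm']
  · -- unit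
    intro c
    constructor
    · rw [hm' one c]
      have : ∀ t : C ⊗[R] C, corR θ one t = ctrL ε t := by
        intro t
        induction t using TensorProduct.induction_on with
        | zero => simp
        | tmul x y => simp [(hθ1 x).2]
        | add s t hs ht => simp [map_add, hs, ht]
      rw [this, (hctr c).1]
    · rw [hm c one]
      have : ∀ t : C ⊗[R] C, corL θ one t = ctrR ε t := by
        intro t
        induction t using TensorProduct.induction_on with
        | zero => simp
        | tmul x y => simp [(hθ1 y).1]
        | add s t hs ht => simp [map_add, hs, ht]
      rw [this, (hctr c).2]
  · intro a a' b; rw [hm, hm, hm, map_add, map_add]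
  · intro a b b'; rw [hm', hm', hm', map_add, map_add]
  · intro r a b
    constructor
    · rw [hm, hm, map_smul, map_smul]
    · rw [hm', hm', map_smul, map_smul]
end

section
/- Let (C, Δ, ε, θ, 1) be a Frobenius R-coring, and let m(c ⊗ d) = c₍₁₎θ(c₍₂₎ ⊗ d) be the induced multiplication on C. Then (C, m, 1, Δ(1), ε) is a Frobenius extension of R: the map r ↦ r·1 is a ring homomorphism R → C, the element Δ(1) ∈ C ⊗_R C satisfies c·Δ(1) = Δ(1)·c for all c ∈ C, and writing Δ(1) = e¹ ⊗ e², one has ε(e¹)e² = e¹ε(e²) = 1. -/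
/-!
STATEMENT 4. A Frobenius `R`-coring `(C, Δ, ε, θ, 1)`, with the induced
multiplication `m(c ⊗ d) = c₍₁₎θ(c₍₂₎ ⊗ d)`, is a Frobenius extension
`(C, m, 1, Δ(1), ε)` of `R`. (`R` commutative acting centrally.)
-/

open TensorProduct

section Aux

variable {R : Type*} [CommRing R] {C : Type*} [AddCommGroup C] [Module R C]

lemma subA (θ : C ⊗[R] C →ₗ[R] R) (c x : C) (u : C ⊗[R] C) :
    LinearMap.rTensor C (corR θ c) ((TensorProduct.assoc R C C C).symm (x ⊗ₜ u))
      = θ (c ⊗ₜ x) • u := by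
  induction u using TensorProduct.induction_on with
  | zero => simp
  | tmul a b =>
      simp [corR, TensorProduct.assoc_symm_tmul, TensorProduct.smul_tmul']
  | add u v hu hv => simp [TensorProduct.tmul_add, hu, hv]

lemma subB (θ : C ⊗[R] C →ₗ[R] R) (c y : C) (u : C ⊗[R] C) :
    LinearMap.lTensor C (corL θ c) (TensorProduct.assoc R C C C (u ⊗ₜ y))
      = θ (y ⊗ₜ c) • u := by
  induction u using TensorProduct.induction_on with
  | zero => simp
  | tmul a b =>
      simp [corL, TensorProduct.assoc_tmul, TensorProduct.smul_tmul']
  | add u v hu hv => simp [TensorProduct.add_tmul, hu, hv]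

lemma claimA (θ : C ⊗[R] C →ₗ[R] R) (Δ : C →ₗ[R] C ⊗[R] C) (c : C)
    (t : C ⊗[R] C) :
    LinearMap.rTensor C (corR θ c)
      ((TensorProduct.assoc R C C C).symm (LinearMap.lTensor C Δ t))
      = Δ (corR θ c t) := by
  induction t using TensorProduct.induction_on with
  | zero => simp
  | tmul x y =>
      rw [LinearMap.lTensor_tmul, subA]
      simp [corR, TensorProduct.smul_tmul']
  | add u v hu hv => simp [hu, hv]

lemma claimB (θ : C ⊗[R] C →ₗ[R] R) (Δ : C →ₗ[R] C ⊗[R] C) (c : C)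
    (t : C ⊗[R] C) :
    LinearMap.lTensor C (corL θ c)
      (TensorProduct.assoc R C C C (LinearMap.rTensor C Δ t))
      = Δ (corL θ c t) := by
  induction t using TensorProduct.induction_on with
  | zero => simp
  | tmul x y =>
      rw [LinearMap.rTensor_tmul, subB]
      simp [corL, TensorProduct.smul_tmul']
  | add u v hu hv => simp [hu, hv]

end Aux

/-- Let `(C, Δ, ε, θ, 1)` be a Frobenius `R`-coring and
`m(c ⊗ d) = c₍₁₎θ(c₍₂₎ ⊗ d)` the induced multiplication. Then
`(C, m, 1, Δ(1), ε)` is a Frobenius extension of `R`:  `r ↦ r • 1` is a ring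
homomorphism `R → C`, the element `e := Δ(1)` is `C`-central
(`c·Δ(1) = Δ(1)·c`), and `ε(e¹)e² = e¹ε(e²) = 1`.  (Here left multiplication by
`c` is the linear map `corR θ c ∘ Δ` and right multiplication by `d` is
`corL θ d ∘ Δ`; these agree with `m` by the coring axioms.) -/
theorem frobenius_extension_of_frobenius_coring
    {R : Type*} [CommRing R] {C : Type*} [AddCommGroup C] [Module R C]
    (Δ : C →ₗ[R] C ⊗[R] C) (ε : C →ₗ[R] R) (θ : C ⊗[R] C →ₗ[R] R) (one : C)
    (h : IsFrobeniusCoring Δ ε θ one)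
    (m : C → C → C) (hm : ∀ c d : C, m c d = corL θ d (Δ c)) :
    -- `r ↦ r • 1` is a ring homomorphism `R → C` (additivity being automatic):
    (∀ r r' : R, m (r • one) (r' • one) = (r * r') • one) ∧
    ((1 : R) • one = one) ∧
    (∀ (r : R) (c : C), m (r • one) c = r • c ∧ m c (r • one) = r • c) ∧
    -- `Δ(1)` is central: `c·Δ(1) = Δ(1)·c` for all `c`
    (∀ c : C, LinearMap.rTensor C (corR θ c ∘ₗ Δ) (Δ one)
        = LinearMap.lTensor C (corL θ c ∘ₗ Δ) (Δ one)) ∧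
    -- writing `Δ(1) = e¹ ⊗ e²`:  `ε(e¹)e² = e¹ε(e²) = 1`
    (ctrL ε (Δ one) = one ∧ ctrR ε (Δ one) = one) := by
  obtain ⟨hassoc, hcounit, hfrob, hθ⟩ := h
  have hεL : (θ ∘ₗ (TensorProduct.mk R C C).flip one) = ε :=
    LinearMap.ext fun c => (hθ c).1
  have hεR : (θ ∘ₗ TensorProduct.mk R C C one) = ε :=
    LinearMap.ext fun c => (hθ c).2
  have hcorLone : ∀ t, corL θ one t = ctrR ε t := by
    intro t; simp only [corL, ctrR, hεL]
  have hcorRone : ∀ t, corR θ one t = ctrL ε t := by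
    intro t; simp only [corR, ctrL, hεR]
  -- corL θ c (Δ one) = c  and  corR θ c (Δ one) = c
  have h2 : ∀ c : C, corL θ c (Δ one) = c := by
    intro c; rw [hfrob one c, hcorRone, (hcounit c).1]
  have h1 : ∀ c : C, corR θ c (Δ one) = c := by
    intro c; rw [← hfrob c one, hcorLone, (hcounit c).2]
  have hml : ∀ c : C, m one c = c := by
    intro c; rw [hm]; exact h2 c
  have hmr : ∀ c : C, m c one = c := by
    intro c; rw [hm, hcorLone, (hcounit c).2]
  have hsml : ∀ (r : R) (c : C), m (r • one) c = r • c := by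
    intro r c
    rw [hm, map_smul, map_smul]
    rw [← hm, hml]
  have hsmr : ∀ (r : R) (c : C), m c (r • one) = r • c := by
    intro r c
    rw [hm, hfrob c (r • one), map_smul, map_smul, h1]
  refine ⟨?_, one_smul R one, fun r c => ⟨hsml r c, hsmr r c⟩, ?_, ?_, ?_⟩
  · intro r r'
    rw [hsml, smul_smul]
  · intro c
    have hL : LinearMap.rTensor C (corR θ c ∘ₗ Δ) (Δ one) = Δ c := by
      rw [LinearMap.rTensor_comp, LinearMap.comp_apply]
      have : LinearMap.rTensor C Δ (Δ one)
          = (TensorProduct.assoc R C C C).symm (LinearMap.lTensor C Δ (Δ one)) := by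
        rw [← hassoc one, LinearEquiv.symm_apply_apply]
      rw [this, claimA, h1]
    have hR : LinearMap.lTensor C (corL θ c ∘ₗ Δ) (Δ one) = Δ c := by
      rw [LinearMap.lTensor_comp, LinearMap.comp_apply]
      rw [← hassoc one, claimB, h2]
    rw [hL, hR]
  · exact (hcounit one).1
  · exact (hcounit one).2
end
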